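/- Let k > 0, let (c_k, …, c_{k-u}), (a_k, …, a_{k-s}), (b_k, …, b_{k-t}) be integer sequences admissible for k, and let j be an integer with j > c_k and j > a_k. If Σ_{i=0}^{u} C(c_{k-i}, k-i) + Σ_{i=0}^{s} C(a_{k-i}, k-i) = C(j, k) + Σ_{i=0}^{t} C(b_{k-i}, k-i), then C(j, k+1) + Σ_{i=0}^{t} C(b_{k-i}, k+1-i) > Σ_{i=0}^{u} C(c_{k-i}, k+1-i) + Σ_{i=0}^{s} C(a_{k-i}, k+1-i). -/

import Mathlib

/-- Binomial coefficient `C(n, t)` with an integer lower index, `0` when `t < 0`. -/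
def chooseZ (n : ℕ) (t : ℤ) : ℕ := if 0 ≤ t then n.choose t.toNat else 0

/-- `Σ_{i=0}^{s} C(a_{k-i}, j-i)`, where `a i` stands for `a_{k-i}`. -/
def cSumZ (a : ℕ → ℕ) (s : ℕ) (j : ℤ) : ℕ :=
  ∑ i ∈ Finset.range (s + 1), chooseZ (a i) (j - i)

/-- `a i` stands for `n_{k-i}`: the sequence `(n_k, …, n_{k-s})` is admissible for `k` iff
`n_k > n_{k-1} > … > n_{k-s} ≥ k-s > 0`. -/
def Admissible (k s : ℕ) (a : ℕ → ℕ) : Prop :=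
  s < k ∧ (∀ i < s, a (i + 1) < a i) ∧ k - s ≤ a s

/-!
Write `L_k` for `cascadeLift k`, the map sending `m = C(p, k) + C(p', k-1) + ⋯` (its greedy
`k`-cascade) to `C(p, k+1) + C(p', k) + ⋯`. For admissible sequences the level-`(k+1)` sums are
`L_k` of the level-`k` sums, so with `X, Y, Z` the three level-`k` sums and `d = Y - Z`, the claim
reads `L_k(Z + d) + L_k(X) < C(j, k+1) + L_k(Z)` where `X + d = C(j, k)`: among intervals of
length `d` below `C(j, k)`, `L_k` grows most on the top one.

This exchange inequality is proved by induction on `k`, together with superadditivity of `L_k` and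
a special case of the exchange inequality; at a fixed level it is proved for `C(n, k)` by induction
on `n`. Pascal's rule `C(n+1, k) = C(n, k-1) + C(n, k)` splits off the leading cascade term, on
which `L_k` acts as `C(n, k+1) + L_{k-1}(·)`, and this reduces every case to the inequalities at
level `k - 1` or at `n`.
-/

namespace Nat

theorem choose_lt_choose_of_lt {n m k : ℕ} (hk : 0 < k) (hkn : k ≤ n) (h : n < m) :
    n.choose k < m.choose k := by
  obtain ⟨k, rfl⟩ : ∃ j, k = j + 1 := ⟨k - 1, by omega⟩
  have := Nat.choose_pos (show k ≤ n by omega)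
  calc n.choose (k + 1) < (n + 1).choose (k + 1) := by
        rw [Nat.choose_succ_succ']; omega
    _ ≤ m.choose (k + 1) := Nat.choose_le_choose _ h

theorem lt_choose_add {k p : ℕ} (hk : 0 < k) (hkp : k ≤ p) : p < p.choose k + k := by
  induction p, hkp using Nat.le_induction with
  | base => simp
  | succ p hkp ih =>
    obtain ⟨k, rfl⟩ : ∃ j, k = j + 1 := ⟨k - 1, by omega⟩
    have := Nat.choose_pos (show k ≤ p by omega)
    rw [Nat.choose_succ_succ']
    omega

theorem choose_two_add (x y : ℕ) : (x + y).choose 2 = x.choose 2 + x * y + y.choose 2 := by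
  induction y with
  | zero => simp
  | succ y ih =>
    rw [← Nat.add_assoc, Nat.choose_succ_succ', Nat.choose_succ_succ' y, ih]
    simp only [Nat.choose_one_right]
    ring

theorem choose_succ_lt_of_choose_lt {m k : ℕ} (hkm : k + 1 ≤ m)
    (h : m.choose (k + 1) < m.choose k) : m.choose (k + 2) < m.choose (k + 1) := by
  have e1 := Nat.choose_succ_right_eq m k
  have e2 := Nat.choose_succ_right_eq m (k + 1)
  have hpos := Nat.choose_pos hkm
  have hmk : m - k < k + 1 := by
    by_contra! hc
    nlinarith [Nat.mul_le_mul_left (m.choose k) hc]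
  have : m.choose (k + 2) * (k + 2) < m.choose (k + 1) * (k + 2) := by
    rw [e2]; exact Nat.mul_lt_mul_of_pos_left (by omega) hpos
  exact Nat.lt_of_mul_lt_mul_right this

end Nat

/-- The largest `p` with `C(p, k) ≤ m`; `k + m` bounds the search by `Nat.lt_choose_add`. -/
def cascadeTop (k m : ℕ) : ℕ := Nat.findGreatest (fun p => p.choose k ≤ m) (k + m)

theorem cascadeTop_spec {k m : ℕ} (hk : 0 < k) (hm : 0 < m) :
    k ≤ cascadeTop k m ∧ (cascadeTop k m).choose k ≤ m ∧
      m < (cascadeTop k m + 1).choose k := by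
  have hself : k.choose k ≤ m := by rw [Nat.choose_self]; omega
  refine ⟨Nat.le_findGreatest (by omega) hself,
    Nat.findGreatest_spec (P := fun p => p.choose k ≤ m) (by omega) hself, ?_⟩
  by_contra! hle
  rcases Nat.lt_or_ge (k + m) (cascadeTop k m + 1) with h | h
  · have := Nat.lt_choose_add hk (show k ≤ cascadeTop k m + 1 by omega)
    omega
  · exact Nat.findGreatest_is_greatest (Nat.lt_succ_self _) h hle

theorem cascadeTop_eq {k m p : ℕ} (hk : 0 < k) (hkp : k ≤ p) (h₁ : p.choose k ≤ m)
    (h₂ : m < (p + 1).choose k) : cascadeTop k m = p := by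
  obtain ⟨hkq, hq₁, hq₂⟩ := cascadeTop_spec hk (lt_of_lt_of_le (Nat.choose_pos hkp) h₁)
  by_contra hne
  rcases Nat.lt_or_gt_of_ne hne with h | h
  · have := Nat.choose_le_choose k (show cascadeTop k m + 1 ≤ p by omega)
    omega
  · have := Nat.choose_le_choose k (show p + 1 ≤ cascadeTop k m by omega)
    omega

/-- If `m = C(p, k) + C(p', k-1) + ⋯` is the greedy (Macaulay) `k`-cascade of `m`, then
`cascadeLift k m = C(p, k+1) + C(p', k) + ⋯`. -/
def cascadeLift : ℕ → ℕ → ℕ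
  | 0, _ => 0
  | k + 1, m =>
    if m = 0 then 0
    else (cascadeTop (k + 1) m).choose (k + 2) +
      cascadeLift k (m - (cascadeTop (k + 1) m).choose (k + 1))

@[simp] theorem cascadeLift_zero_left (m : ℕ) : cascadeLift 0 m = 0 := rfl

@[simp] theorem cascadeLift_zero_right (k : ℕ) : cascadeLift k 0 = 0 := by
  cases k <;> simp [cascadeLift]

theorem cascadeLift_choose_add {k m e : ℕ} (he : e < m.choose k) :
    cascadeLift (k + 1) (m.choose (k + 1) + e) = m.choose (k + 2) + cascadeLift k e := by
  rcases Nat.lt_or_ge m (k + 1) with hmk | hkm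
  · have he0 : e = 0 := by
      rcases Nat.lt_or_ge m k with h | h
      · rw [Nat.choose_eq_zero_of_lt h] at he; omega
      · rw [show m = k by omega, Nat.choose_self] at he; omega
    simp [he0, Nat.choose_eq_zero_of_lt hmk, Nat.choose_eq_zero_of_lt (show m < k + 2 by omega)]
  have hpos := Nat.choose_pos hkm
  have htop : cascadeTop (k + 1) (m.choose (k + 1) + e) = m :=
    cascadeTop_eq (Nat.add_one_pos k) hkm (by omega) (by rw [Nat.choose_succ_succ']; omega)
  rw [cascadeLift, if_neg (by omega), htop, Nat.add_sub_cancel_left]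

theorem exists_eq_choose_add {k x : ℕ} (hx : 0 < x) :
    ∃ p, k + 1 ≤ p ∧ ∃ e < p.choose k, x = p.choose (k + 1) + e := by
  obtain ⟨hkp, h₁, h₂⟩ := cascadeTop_spec (Nat.add_one_pos k) hx
  rw [Nat.choose_succ_succ'] at h₂
  exact ⟨_, hkp, x - (cascadeTop (k + 1) x).choose (k + 1), by omega, by omega⟩

theorem cascadeLift_choose (n k : ℕ) :
    cascadeLift (k + 1) (n.choose (k + 1)) = n.choose (k + 2) := by
  rcases Nat.lt_or_ge n (k + 1) with h | h
  · rw [Nat.choose_eq_zero_of_lt h, Nat.choose_eq_zero_of_lt (by omega), cascadeLift_zero_right]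
  · simpa using cascadeLift_choose_add (Nat.choose_pos (show k ≤ n by omega))

theorem cascadeLift_choose_of_pos {k : ℕ} (hk : 0 < k) (n : ℕ) :
    cascadeLift k (n.choose k) = n.choose (k + 1) := by
  obtain ⟨j, rfl⟩ : ∃ j, k = j + 1 := ⟨k - 1, by omega⟩
  exact cascadeLift_choose n j

theorem cascadeLift_choose_le (n k : ℕ) : cascadeLift k (n.choose k) ≤ n.choose (k + 1) := by
  cases k with
  | zero => simp
  | succ k => exact (cascadeLift_choose n k).le

theorem cascadeLift_eq_zero {k m : ℕ} (h : m ≤ k) : cascadeLift k m = 0 := by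
  induction k generalizing m with
  | zero => rfl
  | succ k ih =>
    rcases Nat.eq_zero_or_pos m with rfl | hm
    · simp
    have hsplit : m = (k + 1).choose (k + 1) + (m - 1) := by rw [Nat.choose_self]; omega
    rw [hsplit, cascadeLift_choose_add (by rw [Nat.choose_succ_self_right]; omega),
      Nat.choose_succ_self, ih (by omega)]

theorem cascadeLift_one (x : ℕ) : cascadeLift 1 x = x.choose 2 := by
  rcases Nat.eq_zero_or_pos x with rfl | hx
  · simp
  · simpa using cascadeLift_choose_add (k := 0) (m := x) (e := 0) (by simp)

theorem cascadeLift_eq_choose_add_sub {k m x : ℕ} (h₁ : m.choose (k + 1) ≤ x)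
    (h₂ : x < m.choose k + m.choose (k + 1)) :
    cascadeLift (k + 1) x = m.choose (k + 2) + cascadeLift k (x - m.choose (k + 1)) := by
  have := cascadeLift_choose_add (k := k) (m := m) (e := x - m.choose (k + 1)) (by omega)
  rwa [Nat.add_sub_cancel' h₁] at this

/-- As `cascadeLift k (C(n, k)) = C(n, k+1)` for `0 < k`, this says that among intervals of length
`d` below `C(n, k)`, `cascadeLift k` increases most on the top one, `[C(n, k) - d, C(n, k)]`. -/
def ExchangeAt (k n : ℕ) : Prop :=
  ∀ a d b, a + d ≤ n.choose k → b + d = n.choose k →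
    cascadeLift k (a + d) + cascadeLift k b ≤ n.choose (k + 1) + cascadeLift k a

def StrictExchangeAt (k n : ℕ) : Prop :=
  ∀ a d b, a + d < n.choose k → 0 < d → b + d = n.choose k →
    cascadeLift k (a + d) + cascadeLift k b < n.choose (k + 1) + cascadeLift k a

theorem StrictExchangeAt.exchangeAt {k n : ℕ} (h : StrictExchangeAt k n) : ExchangeAt k n := by
  intro a d b had hbd
  have hC := cascadeLift_choose_le n k
  rcases Nat.eq_zero_or_pos d with rfl | hd
  · obtain rfl : b = n.choose k := hbd
    rw [Nat.add_zero]
    omega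
  rcases Nat.lt_or_ge (a + d) (n.choose k) with hlt | hge
  · exact (h a d b hlt hd hbd).le
  · obtain rfl : a = b := by omega
    rw [show a + d = n.choose k by omega]
    omega

def LiftSuperadditive (k : ℕ) : Prop :=
  ∀ a b, cascadeLift k a + cascadeLift k b ≤ cascadeLift k (a + b)

theorem LiftSuperadditive.monotone {k : ℕ} (h : LiftSuperadditive k) :
    Monotone (cascadeLift k) := by
  intro a b hab
  obtain ⟨c, rfl⟩ := Nat.exists_eq_add_of_le hab
  exact le_of_add_le_left (h a c)

/-- By `cascadeLift_choose_add`, this is `StrictExchangeAt (k + 1) (m + 1)` for the interval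
`[C(m, k+1) - d, C(m, k+1) - d + C(m, k)]`; the induction on `m` proving `StrictExchangeAt` needs
this case at `m` itself. -/
def PascalGapAt (k m : ℕ) : Prop :=
  ∀ d b, 0 < d → b + d = m.choose k →
    m.choose (k + 2) + cascadeLift k b <
      m.choose (k + 1) + cascadeLift (k + 1) (m.choose (k + 1) - d)

def PascalGap (k : ℕ) : Prop := ∀ m, k + 1 ≤ m → PascalGapAt k m

theorem strictExchangeAt_one (n : ℕ) : StrictExchangeAt 1 n := by
  intro a d b had hd hbd
  rw [Nat.choose_one_right] at had hbd
  subst hbd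
  simp only [Nat.reduceAdd, cascadeLift_one, Nat.choose_two_add]
  have : a * d < b * d := Nat.mul_lt_mul_of_pos_right (by omega) hd
  omega

theorem liftSuperadditive_one : LiftSuperadditive 1 := by
  intro a b
  simp only [cascadeLift_one, Nat.choose_two_add]
  omega

theorem pascalGap_one : PascalGap 1 := by
  intro m hm d b hd hbd
  rw [Nat.choose_one_right] at hbd
  simp only [cascadeLift_one]
  obtain ⟨n, rfl⟩ : ∃ n, m = n + 1 := ⟨m - 1, by omega⟩
  have hsucc2 (x : ℕ) : (x + 1).choose 2 = x + x.choose 2 := by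
    rw [Nat.choose_succ_succ', Nat.choose_one_right]
  have hsucc3 (x : ℕ) : (x + 1).choose 3 = x.choose 2 + x.choose 3 := Nat.choose_succ_succ' x 2
  rw [hsucc2, hsucc3]
  rcases Nat.lt_or_ge n d with hdn | hdn
  · obtain rfl : b = 0 := by omega
    obtain rfl : d = n + 1 := by omega
    obtain ⟨q, rfl⟩ | rfl : (∃ q, n = q + 2) ∨ n = 1 := by
      rcases Nat.lt_or_ge n 2 with h | h
      · right; omega
      · left; exact ⟨n - 2, by omega⟩
    · have hlift : cascadeLift 2 (q + 2 + (q + 2).choose 2 - (q + 2 + 1)) =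
          (q + 1).choose 3 + q.choose 2 := by
        rw [show q + 2 + (q + 2).choose 2 - (q + 2 + 1) = (q + 1).choose 2 + q by
          rw [hsucc2 (q + 1)]; omega]
        simpa [cascadeLift_one] using
          cascadeLift_choose_add (k := 1) (m := q + 1) (e := q) (by simp)
      rw [hlift, hsucc3 (q + 1), hsucc2 q, Nat.choose_zero_succ]
      omega
    · simp [Nat.choose_eq_zero_of_lt]
  · have hlift : cascadeLift 2 (n + n.choose 2 - d) = n.choose 3 + (n - d).choose 2 := by
      rw [show n + n.choose 2 - d = n.choose 2 + (n - d) by omega]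
      simpa [cascadeLift_one] using
        cascadeLift_choose_add (k := 1) (m := n) (e := n - d) (by simp; omega)
    rw [hlift, show b = n - d + 1 by omega, hsucc2]
    omega

theorem strictExchangeAt_succ_of_le {k n a d b : ℕ} (hkn : k + 1 ≤ n)
    (hexch' : ExchangeAt (k + 1) n) (hpascal : PascalGapAt k n) (hd : 0 < d)
    (hbd : b + d = n.choose k + n.choose (k + 1)) (had : a + d ≤ n.choose (k + 1)) :
    cascadeLift (k + 1) (a + d) + cascadeLift (k + 1) b <
      n.choose (k + 1) + n.choose (k + 2) + cascadeLift (k + 1) a := by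
  have hR : 0 < n.choose k := Nat.choose_pos (by omega)
  -- `omega` treats these two defeq terms as unrelated atoms
  have hk2 : n.choose (k + 1 + 1) = n.choose (k + 2) := rfl
  have hq := hexch' a d (n.choose (k + 1) - d) had (by omega)
  rcases Nat.lt_or_ge (n.choose k) d with hRd | hdR
  · have hq' := hexch' (n.choose (k + 1) - d) (n.choose k) (n.choose (k + 1) - n.choose k)
      (by omega) (by omega)
    rw [show n.choose (k + 1) - d + n.choose k = b by omega] at hq'
    have hgap₀ := hpascal (n.choose k) 0 hR (by omega)
    rw [cascadeLift_zero_right] at hgap₀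
    omega
  · have hb : cascadeLift (k + 1) b = n.choose (k + 2) + cascadeLift k (n.choose k - d) := by
      rw [cascadeLift_eq_choose_add_sub (m := n) (by omega) (by omega)]
      congr 2
      omega
    have hgap₁ := hpascal d (n.choose k - d) hd (by omega)
    omega

theorem strictExchangeAt_succ_of_lt {k n a d b : ℕ} (hstrict : StrictExchangeAt k n)
    (hsuper : LiftSuperadditive k) (hexch' : ExchangeAt (k + 1) n) (hpascal : PascalGapAt k n)
    (hd : 0 < d)
    (hbd : b + d = n.choose k + n.choose (k + 1)) (had : a + d < n.choose k + n.choose (k + 1))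
    (hlt : n.choose (k + 1) < a + d) :
    cascadeLift (k + 1) (a + d) + cascadeLift (k + 1) b <
      n.choose (k + 1) + n.choose (k + 2) + cascadeLift (k + 1) a := by
  have hk2 : n.choose (k + 1 + 1) = n.choose (k + 2) := rfl
  set A := n.choose (k + 1) with hA
  set R := n.choose k with hR
  have hw : cascadeLift (k + 1) (a + d) = n.choose (k + 2) + cascadeLift k (a + d - A) :=
    cascadeLift_eq_choose_add_sub hlt.le had
  rcases le_or_gt A a with haA | haA
  · have ha : cascadeLift (k + 1) a = n.choose (k + 2) + cascadeLift k (a - A) :=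
      cascadeLift_eq_choose_add_sub haA (by omega)
    have hb : cascadeLift (k + 1) b = n.choose (k + 2) + cascadeLift k (R - d) := by
      rw [cascadeLift_eq_choose_add_sub (m := n) (by omega) (by omega), show b - A = R - d by omega]
    have hs := hstrict (a - A) d (R - d) (by omega) hd (by omega)
    rw [show a - A + d = a + d - A by omega] at hs
    omega
  rcases le_or_gt d R with hdR | hRd
  · have hb : cascadeLift (k + 1) b = n.choose (k + 2) + cascadeLift k (R - d) := by
      rw [cascadeLift_eq_choose_add_sub (m := n) (by omega) (by omega), show b - A = R - d by omega]
    have hsup := hsuper (a + d - A) (R - d)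
    rw [show a + d - A + (R - d) = R - (A - a) by omega] at hsup
    have hgap := hpascal (A - a) (R - (A - a)) (by omega) (by omega)
    rw [show A - (A - a) = a by omega] at hgap
    omega
  · have hq := hexch' a (R - (a + d - A)) (A - (R - (a + d - A))) (by omega) (by omega)
    rw [show a + (R - (a + d - A)) = b by omega] at hq
    have hgap := hpascal (R - (a + d - A)) (a + d - A) (by omega) (by omega)
    rw [← hA] at hgap
    omega

theorem strictExchangeAt_succ {k n : ℕ} (hkn : k + 1 ≤ n) (hstrict : StrictExchangeAt k n)
    (hsuper : LiftSuperadditive k) (hpascal : PascalGapAt k n)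
    (hstrict' : StrictExchangeAt (k + 1) n) :
    StrictExchangeAt (k + 1) (n + 1) := by
  intro a d b had hd hbd
  rw [Nat.choose_succ_succ'] at had hbd
  rw [Nat.choose_succ_succ']
  rcases le_or_gt (a + d) (n.choose (k + 1)) with hle | hlt
  · exact strictExchangeAt_succ_of_le hkn hstrict'.exchangeAt hpascal hd hbd hle
  · exact strictExchangeAt_succ_of_lt hstrict hsuper hstrict'.exchangeAt hpascal hd hbd had hlt

theorem strictExchangeAt_of_le {k n : ℕ} (hn : n ≤ k) : StrictExchangeAt k n := by
  intro a d b had hd _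
  have : n.choose k ≤ 1 := by
    rcases hn.lt_or_eq with h | rfl
    · rw [Nat.choose_eq_zero_of_lt h]; omega
    · rw [Nat.choose_self]
  omega

theorem strictExchangeAt_succ_level {k : ℕ} (hstrict : ∀ n, StrictExchangeAt k n)
    (hsuper : LiftSuperadditive k) (hpascal : PascalGap k) (n : ℕ) :
    StrictExchangeAt (k + 1) n := by
  rcases Nat.lt_or_ge n (k + 1) with hn | hn
  · exact strictExchangeAt_of_le hn.le
  induction n, hn using Nat.le_induction with
  | base => exact strictExchangeAt_of_le le_rfl
  | succ n hkn ih => exact strictExchangeAt_succ hkn (hstrict n) hsuper (hpascal n hkn) ih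

theorem choose_le_cascadeLift_choose {k : ℕ} (hk : 0 < k) (hsuper : LiftSuperadditive k)
    (p : ℕ) :
    p.choose (k + 2) ≤ cascadeLift k (p.choose (k + 1)) := by
  induction p with
  | zero => simp
  | succ p ih =>
    have h := hsuper (p.choose k) (p.choose (k + 1))
    rw [cascadeLift_choose_of_pos hk] at h
    have h₁ : (p + 1).choose (k + 1) = p.choose k + p.choose (k + 1) := Nat.choose_succ_succ' p k
    have h₂ : (p + 1).choose (k + 2) = p.choose (k + 1) + p.choose (k + 2) :=
      Nat.choose_succ_succ' p (k + 1)
    rw [h₁, h₂]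
    omega

theorem cascadeLift_succ_le {k : ℕ} (hk : 0 < k) (hsuper : LiftSuperadditive k) (x : ℕ) :
    cascadeLift (k + 1) x ≤ cascadeLift k x := by
  rcases Nat.eq_zero_or_pos x with rfl | hx
  · simp
  obtain ⟨p, -, e, he, rfl⟩ := exists_eq_choose_add (k := k) hx
  rw [cascadeLift_choose_add he]
  have := hsuper (p.choose (k + 1)) e
  have := choose_le_cascadeLift_choose hk hsuper p
  omega

theorem cascadeLift_add_cascadeLift_succ_le {k p e d b : ℕ} (hsuper : LiftSuperadditive k)
    (hexch : ExchangeAt k p) (hexch' : ExchangeAt (k + 1) p) (hpascal : PascalGapAt k p)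
    (hd : 0 < d)
    (hde : e + d = p.choose k) (hdb : d ≤ b) (hb : b < p.choose k + p.choose (k + 1)) :
    cascadeLift k e + cascadeLift (k + 1) b ≤ p.choose (k + 1) + cascadeLift (k + 1) (b - d) := by
  have hk2 : p.choose (k + 1 + 1) = p.choose (k + 2) := rfl
  rcases le_or_gt b (p.choose (k + 1)) with hbA | hAb
  · have hq := hexch' (b - d) d (p.choose (k + 1) - d) (by omega) (by omega)
    rw [Nat.sub_add_cancel hdb] at hq
    have hgap := hpascal d e hd hde
    omega
  have hfb : cascadeLift (k + 1) b = p.choose (k + 2) + cascadeLift k (b - p.choose (k + 1)) :=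
    cascadeLift_eq_choose_add_sub hAb.le hb
  rcases le_or_gt d (b - p.choose (k + 1)) with hdb' | hdb'
  · have hfbd : cascadeLift (k + 1) (b - d) =
        p.choose (k + 2) + cascadeLift k (b - p.choose (k + 1) - d) := by
      rw [cascadeLift_eq_choose_add_sub (m := p) (by omega) (by omega)]
      congr 2
      omega
    have hq := hexch (b - p.choose (k + 1) - d) d e (by omega) hde
    rw [Nat.sub_add_cancel hdb'] at hq
    omega
  · have hsup := hsuper e (b - p.choose (k + 1))
    have hgap := hpascal (d - (b - p.choose (k + 1))) (e + (b - p.choose (k + 1))) (by omega)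
      (by omega)
    rw [show p.choose (k + 1) - (d - (b - p.choose (k + 1))) = b - d by omega] at hgap
    omega

theorem liftSuperadditive_succ {k : ℕ} (hsuper : LiftSuperadditive k)
    (hexch : ∀ n, ExchangeAt k n)
    (hexch' : ∀ n, ExchangeAt (k + 1) n) (hpascal : PascalGap k)
    (hlower : ∀ x, cascadeLift (k + 1) x ≤ cascadeLift k x) : LiftSuperadditive (k + 1) := by
  suffices h : ∀ b a, b ≤ a →
      cascadeLift (k + 1) a + cascadeLift (k + 1) b ≤ cascadeLift (k + 1) (a + b) by
    intro a b
    rcases le_total b a with hba | hab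
    · exact h b a hba
    · rw [Nat.add_comm a b, Nat.add_comm (cascadeLift (k + 1) a)]
      exact h a b hab
  intro b
  induction b using Nat.strong_induction_on with
  | _ b ih =>
  intro a hba
  rcases Nat.eq_zero_or_pos b with rfl | hb
  · simp
  obtain ⟨p, hkp, e, he, rfl⟩ := exists_eq_choose_add (k := k) (show 0 < a by omega)
  rw [cascadeLift_choose_add he]
  rcases Nat.lt_or_ge (e + b) (p.choose k) with hsmall | hbig
  · rw [Nat.add_assoc (p.choose (k + 1)), cascadeLift_choose_add hsmall]
    have := hsuper e b
    have := hlower b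
    omega
  · have hk2 : p.choose (k + 1 + 1) = p.choose (k + 2) := rfl
    have hclaim := cascadeLift_add_cascadeLift_succ_le (e := e) (d := p.choose k - e) (b := b)
      hsuper (hexch p) (hexch' p) (hpascal p hkp) (by omega) (by omega) (by omega) (by omega)
    have hrec := ih (b - (p.choose k - e)) (by omega) ((p + 1).choose (k + 1))
      (by rw [Nat.choose_succ_succ']; omega)
    rw [cascadeLift_choose, Nat.choose_succ_succ' p (k + 1),
      show (p + 1).choose (k + 1) + (b - (p.choose k - e)) = p.choose (k + 1) + e + b by
        rw [Nat.choose_succ_succ']; omega] at hrec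
    omega

theorem pascalGapAt_succ_shifted {k m t b : ℕ} (hkm : k + 1 ≤ m) (hpascal : PascalGapAt k m)
    (hpascal' : PascalGapAt (k + 1) m) (hlower : ∀ x, cascadeLift (k + 1) x ≤ cascadeLift k x)
    (hmono : Monotone (cascadeLift (k + 1))) (ht : 0 < t) (hbt : b + t = m.choose k) :
    m.choose (k + 3) + cascadeLift (k + 1) b <
      m.choose (k + 1) + cascadeLift (k + 2) (m.choose (k + 2) - t) := by
  have bounded : ∀ t b, 0 < t → t ≤ m.choose (k + 1) → b + t = m.choose k →
      m.choose (k + 3) + cascadeLift (k + 1) b <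
        m.choose (k + 1) + cascadeLift (k + 2) (m.choose (k + 2) - t) := by
    intro t b ht htA hbt
    have h₁ : m.choose (k + 3) + cascadeLift (k + 1) (m.choose (k + 1) - t) <
        m.choose (k + 2) + cascadeLift (k + 2) (m.choose (k + 2) - t) :=
      hpascal' t (m.choose (k + 1) - t) ht (by omega)
    have h₂ := hpascal t b ht hbt
    have h₃ := hlower b
    omega
  rcases le_or_gt t (m.choose (k + 1)) with htA | hAt
  · exact bounded t b ht htA hbt
  have hdesc := Nat.choose_succ_lt_of_choose_lt hkm (by omega)
  have hA := Nat.choose_pos hkm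
  have h := bounded (m.choose (k + 1)) (m.choose k - m.choose (k + 1)) hA le_rfl (by omega)
  have hb := hmono (show b ≤ m.choose k - m.choose (k + 1) by omega)
  rw [Nat.sub_eq_zero_of_le hdesc.le] at h
  rw [Nat.sub_eq_zero_of_le (by omega : m.choose (k + 2) ≤ t)]
  omega

theorem pascalGapAt_succ_succ {k m : ℕ} (hkm : k + 1 ≤ m) (hpascal : PascalGapAt k m)
    (hpascal' : PascalGapAt (k + 1) m) (hexch' : ExchangeAt (k + 1) m)
    (hlower : ∀ x, cascadeLift (k + 1) x ≤ cascadeLift k x)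
    (hmono : Monotone (cascadeLift (k + 1))) :
    PascalGapAt (k + 1) (m + 1) := by
  intro d b hd hbd
  show (m + 1).choose (k + 3) + cascadeLift (k + 1) b <
    (m + 1).choose (k + 2) + cascadeLift (k + 2) ((m + 1).choose (k + 2) - d)
  have e₁ : (m + 1).choose (k + 1) = m.choose k + m.choose (k + 1) := Nat.choose_succ_succ' m k
  have e₂ : (m + 1).choose (k + 2) = m.choose (k + 1) + m.choose (k + 2) :=
    Nat.choose_succ_succ' m (k + 1)
  have e₃ : (m + 1).choose (k + 3) = m.choose (k + 2) + m.choose (k + 3) :=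
    Nat.choose_succ_succ' m (k + 2)
  have hk2 : m.choose (k + 1 + 1) = m.choose (k + 2) := rfl
  rw [e₁] at hbd
  rw [e₂, e₃]
  rcases le_or_gt d (m.choose (k + 1)) with hdA | hAd
  · have hf : cascadeLift (k + 2) (m.choose (k + 1) + m.choose (k + 2) - d) =
        m.choose (k + 3) + cascadeLift (k + 1) (m.choose (k + 1) - d) := by
      rw [show m.choose (k + 1) + m.choose (k + 2) - d = m.choose (k + 2) + (m.choose (k + 1) - d)
        by omega]
      exact cascadeLift_choose_add (by omega)
    rw [hf]
    rcases le_or_gt d (m.choose k) with hdR | hRd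
    · have hb : cascadeLift (k + 1) b = m.choose (k + 2) + cascadeLift k (m.choose k - d) := by
        rw [cascadeLift_eq_choose_add_sub (m := m) (by omega) (by omega)]
        congr 2
        omega
      have hgap := hpascal d (m.choose k - d) hd (by omega)
      omega
    · have hq := hexch' (m.choose (k + 1) - d) (m.choose k) (m.choose (k + 1) - m.choose k)
        (by omega) (by omega)
      rw [show m.choose (k + 1) - d + m.choose k = b by omega] at hq
      have hgap := hpascal (m.choose k) 0 (Nat.choose_pos (by omega)) (by omega)
      rw [cascadeLift_zero_right] at hgap
      omega
  · have h := pascalGapAt_succ_shifted hkm hpascal hpascal' hlower hmono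
      (t := d - m.choose (k + 1)) (b := b)
      (by omega) (by omega)
    rw [show m.choose (k + 1) + m.choose (k + 2) - d = m.choose (k + 2) - (d - m.choose (k + 1))
      by omega]
    omega

theorem pascalGap_succ {k : ℕ} (hpascal : PascalGap k) (hexch' : ∀ n, ExchangeAt (k + 1) n)
    (hlower : ∀ x, cascadeLift (k + 1) x ≤ cascadeLift k x)
    (hmono : Monotone (cascadeLift (k + 1))) :
    PascalGap (k + 1) := by
  intro m hm
  induction m, hm using Nat.le_induction with
  | base =>
    intro d b hd hbd
    rw [Nat.choose_succ_self_right] at hbd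
    rw [cascadeLift_eq_zero (show b ≤ k + 1 by omega), Nat.choose_self,
      Nat.choose_eq_zero_of_lt (by omega)]
    omega
  | succ m hm ih =>
    exact pascalGapAt_succ_succ (by omega) (hpascal m (by omega)) ih (hexch' m) hlower hmono

theorem exchange_superadditive_pascalGap {k : ℕ} (hk : 0 < k) :
    (∀ n, StrictExchangeAt k n) ∧ LiftSuperadditive k ∧ PascalGap k := by
  induction k, hk using Nat.le_induction with
  | base => exact ⟨strictExchangeAt_one, liftSuperadditive_one, pascalGap_one⟩
  | succ k hk ih =>
    obtain ⟨hstrict, hsuper, hpascal⟩ := ih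
    have hlower := cascadeLift_succ_le hk hsuper
    have hstrict' := strictExchangeAt_succ_level hstrict hsuper hpascal
    have hexch' n := (hstrict' n).exchangeAt
    have hsuper' :=
      liftSuperadditive_succ hsuper (fun n => (hstrict n).exchangeAt) hexch' hpascal hlower
    exact ⟨hstrict', hsuper', pascalGap_succ hpascal hexch' hlower hsuper'.monotone⟩

def cascadeSum (a : ℕ → ℕ) (s v : ℕ) : ℕ :=
  ∑ i ∈ Finset.range (s + 1), (a i).choose (v - i)

theorem cSumZ_eq_cascadeSum (a : ℕ → ℕ) {s v : ℕ} (h : s < v) :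
    cSumZ a s v = cascadeSum a s v := by
  refine Finset.sum_congr rfl fun i hi => ?_
  rw [Finset.mem_range] at hi
  rw [chooseZ, if_pos (by omega)]
  congr 1
  omega

theorem cascadeSum_succ (a : ℕ → ℕ) (s v : ℕ) :
    cascadeSum a (s + 1) v = (a 0).choose v + cascadeSum (fun i => a (i + 1)) s (v - 1) := by
  rw [cascadeSum, Finset.sum_range_succ', Nat.add_comm, Nat.sub_zero, cascadeSum]
  congr 1
  refine Finset.sum_congr rfl fun i _ => ?_
  rw [Nat.sub_sub, Nat.add_comm 1 i]

namespace Admissible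

variable {k s : ℕ} {a : ℕ → ℕ}

theorem tail (ha : Admissible k (s + 1) a) : Admissible (k - 1) s (fun i => a (i + 1)) := by
  obtain ⟨hsk, hdec, hlast⟩ := ha
  exact ⟨by omega, fun i hi => hdec (i + 1) (by omega), show k - 1 - s ≤ a (s + 1) by omega⟩

theorem le_head (ha : Admissible k s a) : k ≤ a 0 := by
  induction s generalizing k a with
  | zero => simpa using ha.2.2
  | succ s ih =>
    have := ih ha.tail
    have := ha.2.1 0 (by omega)
    omega

theorem cascadeSum_lt (ha : Admissible k s a) : cascadeSum a s k < (a 0 + 1).choose k := by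
  induction s generalizing k a with
  | zero =>
    simpa [cascadeSum] using Nat.choose_lt_choose_of_lt (by have := ha.1; omega) ha.le_head
      (Nat.lt_succ_self _)
  | succ s ih =>
    obtain ⟨k, rfl⟩ : ∃ j, k = j + 1 := ⟨k - 1, by have := ha.1; omega⟩
    have htail : Admissible k s (fun i => a (i + 1)) := ha.tail
    have h₁ : cascadeSum (fun i => a (i + 1)) s k < (a 1 + 1).choose k := ih htail
    have h₂ : (a 1 + 1).choose k ≤ (a 0).choose k :=
      Nat.choose_le_choose k (ha.2.1 0 (by omega))
    rw [cascadeSum_succ, Nat.choose_succ_succ', Nat.add_sub_cancel]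
    omega

theorem cascadeLift_cascadeSum (ha : Admissible k s a) :
    cascadeLift k (cascadeSum a s k) = cascadeSum a s (k + 1) := by
  induction s generalizing k a with
  | zero => simpa [cascadeSum] using cascadeLift_choose_of_pos (by have := ha.1; omega) (a 0)
  | succ s ih =>
    obtain ⟨k, rfl⟩ : ∃ j, k = j + 1 := ⟨k - 1, by have := ha.1; omega⟩
    have htail : Admissible k s (fun i => a (i + 1)) := ha.tail
    have hlt := htail.cascadeSum_lt.trans_le (Nat.choose_le_choose k (ha.2.1 0 (by omega)))
    rw [cascadeSum_succ, cascadeSum_succ, Nat.add_sub_cancel, Nat.add_sub_cancel,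
      cascadeLift_choose_add hlt, ih htail]

end Admissible

theorem algorithm_lemma'_general (k s t u j : ℕ) (a b c : ℕ → ℕ)
    (ha : Admissible k s a) (hb : Admissible k t b) (hc : Admissible k u c)
    (hjc : c 0 < j) (hja : a 0 < j)
    (heq : cSumZ c u (k : ℤ) + cSumZ a s (k : ℤ) = j.choose k + cSumZ b t (k : ℤ)) :
    cSumZ c u ((k : ℤ) + 1) + cSumZ a s ((k : ℤ) + 1) <
      j.choose (k + 1) + cSumZ b t ((k : ℤ) + 1) := by
  have hs := ha.1
  have ht := hb.1
  have hu := hc.1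
  have hcast : (k : ℤ) + 1 = ((k + 1 : ℕ) : ℤ) := by push_cast; rfl
  rw [hcast, cSumZ_eq_cascadeSum c (by omega), cSumZ_eq_cascadeSum a (by omega),
    cSumZ_eq_cascadeSum b (by omega), ← ha.cascadeLift_cascadeSum,
    ← hb.cascadeLift_cascadeSum, ← hc.cascadeLift_cascadeSum]
  rw [cSumZ_eq_cascadeSum c hu, cSumZ_eq_cascadeSum a hs, cSumZ_eq_cascadeSum b ht] at heq
  set X := cascadeSum c u k
  set Y := cascadeSum a s k
  set Z := cascadeSum b t k
  have hX : X < j.choose k := hc.cascadeSum_lt.trans_le (Nat.choose_le_choose k hjc)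
  have hY : Y < j.choose k := ha.cascadeSum_lt.trans_le (Nat.choose_le_choose k hja)
  have h := (exchange_superadditive_pascalGap (k := k) (by omega)).1 j Z (Y - Z) X
    (by omega) (by omega) (by omega)
  rw [Nat.add_sub_cancel' (by omega)] at h
  omega

/-- Lemma (algorithm, second form): for `k > 0`, sequences admissible for `k`, and `j` with
`j > c_k` and `j > a_k`, if `Σ C(c_{k-i}, k-i) + Σ C(a_{k-i}, k-i) = C(j, k) + Σ C(b_{k-i}, k-i)`,
then `C(j, k+1) + Σ C(b_{k-i}, k+1-i) > Σ C(c_{k-i}, k+1-i) + Σ C(a_{k-i}, k+1-i)`. -/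
theorem algorithm_lemma' (k s t u j : ℕ) (a b c : ℕ → ℕ) (hk : 0 < k)
    (ha : Admissible k s a) (hb : Admissible k t b) (hc : Admissible k u c)
    (hjc : c 0 < j) (hja : a 0 < j)
    (heq : cSumZ c u (k : ℤ) + cSumZ a s (k : ℤ) = j.choose k + cSumZ b t (k : ℤ)) :
    cSumZ c u ((k : ℤ) + 1) + cSumZ a s ((k : ℤ) + 1) <
      j.choose (k + 1) + cSumZ b t ((k : ℤ) + 1) :=
  algorithm_lemma'_general k s t u j a b c ha hb hc hjc hja heq
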